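/- Lemma 2, parts 3–4 (Convergence of the submartingale). Let θ_TX = θ₀ and run the partial-information algorithm with self-awareness, and define m_i := Σ_{k=1}^K v_k log μ_{k,i}(θ_TX). Then: (3) there exists a random variable m_∞ such that m_i → m_∞ almost surely as i → ∞; and (4) the expectations E(m_i) converge to a finite limit. -/

import Mathlib

/-!
Let `m_i = ∑ k, v k * log μ_{k,i}(θ₀)`. It is nonpositive, and it is a submartingale for the
filtration of the signals. The log of a geometric pool of positive beliefs is, at every hypothesis,
at least the weighted average of the pooled log-beliefs, because by weighted AM-GM the normalising
constant is at most one. With `θTX = θ₀`, every belief entering agent `k`'s pool, its own posterior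
or a neighbour's partial share, takes at `θ₀` the value of that agent's Bayesian posterior; as
`A v = v`, this gives `m_{i+1} ≥ ∑ ℓ, v ℓ * log ψ_{ℓ,i+1}(θ₀)`. Given the past, the Bayesian update
raises the expected log-belief in the truth, because each likelihood ratio `L(ξ|θ) / L(ξ|θ₀)` has
mean one under `θ₀` and `log x ≤ x - 1`. A nonpositive submartingale is bounded in `L¹` by
`-E m₀`, hence converges almost surely, and its expectations increase to a finite limit.
-/

open MeasureTheory ProbabilityTheory Filter Topology

section Belief

variable {Θ : Type*} [Fintype Θ]

structure IsPositiveBelief (p : Θ → ℝ) : Prop where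
  pos : ∀ θ, 0 < p θ
  sum_eq_one : ∑ θ, p θ = 1

namespace IsPositiveBelief

variable {p : Θ → ℝ}

lemma le_one (hp : IsPositiveBelief p) (θ : Θ) : p θ ≤ 1 :=
  hp.sum_eq_one ▸ Finset.single_le_sum (fun θ' _ => (hp.pos θ').le) (Finset.mem_univ θ)

lemma log_nonpos (hp : IsPositiveBelief p) (θ : Θ) : Real.log (p θ) ≤ 0 :=
  Real.log_nonpos (hp.pos θ).le (hp.le_one θ)

lemma lt_one (hp : IsPositiveBelief p) {θ θ' : Θ} (hne : θ' ≠ θ) : p θ < 1 := by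
  classical
  have := Finset.sum_le_sum_of_subset_of_nonneg (Finset.subset_univ {θ, θ'})
    fun θ'' _ _ => (hp.pos θ'').le
  rw [Finset.sum_pair hne.symm, hp.sum_eq_one] at this
  linarith [hp.pos θ']

lemma nonempty (hp : IsPositiveBelief p) : Nonempty Θ := by
  by_contra h
  have := hp.sum_eq_one
  simp_all

end IsPositiveBelief

lemma isPositiveBelief_div_sum [Nonempty Θ] {q : Θ → ℝ} (hq : ∀ θ, 0 < q θ) :
    IsPositiveBelief fun θ => q θ / ∑ θ', q θ' where
  pos θ := div_pos (hq θ) (Finset.sum_pos (fun θ' _ => hq θ') Finset.univ_nonempty)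
  sum_eq_one := by
    rw [← Finset.sum_div, div_self (Finset.sum_pos (fun θ' _ => hq θ') Finset.univ_nonempty).ne']

noncomputable def bayesUpdate (μ l : Θ → ℝ) (θ : Θ) : ℝ :=
  μ θ * l θ / ∑ θ', μ θ' * l θ'

lemma isPositiveBelief_bayesUpdate {μ l : Θ → ℝ} (hμ : IsPositiveBelief μ)
    (hl : ∀ θ, 0 < l θ) : IsPositiveBelief (bayesUpdate μ l) :=
  have := hμ.nonempty
  isPositiveBelief_div_sum fun θ => mul_pos (hμ.pos θ) (hl θ)

lemma one_sub_sum_mul_div_le_log_bayesUpdate_sub_log {μ l : Θ → ℝ}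
    (hμ : IsPositiveBelief μ) (hl : ∀ θ, 0 < l θ) (θ₀ : Θ) :
    1 - ∑ θ, μ θ * (l θ / l θ₀) ≤ Real.log (bayesUpdate μ l θ₀) - Real.log (μ θ₀) := by
  have := hμ.nonempty
  have hZ : 0 < ∑ θ, μ θ * l θ :=
    Finset.sum_pos (fun θ _ => mul_pos (hμ.pos θ) (hl θ)) Finset.univ_nonempty
  have hx : ∑ θ, μ θ * (l θ / l θ₀) = (∑ θ, μ θ * l θ) / l θ₀ := by
    rw [Finset.sum_div]
    simp only [mul_div_assoc]
  have hbayes : bayesUpdate μ l θ₀ = μ θ₀ / ((∑ θ, μ θ * l θ) / l θ₀) := by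
    rw [bayesUpdate, div_div_eq_mul_div]
  rw [hx, hbayes, Real.log_div (hμ.pos θ₀).ne' (div_pos hZ (hl θ₀)).ne']
  linarith [Real.log_le_sub_one_of_pos (div_pos hZ (hl θ₀))]

lemma log_sub_sum_div_le_log_bayesUpdate {μ l : Θ → ℝ}
    (hμ : IsPositiveBelief μ) (hl : ∀ θ, 0 < l θ) (θ₀ : Θ) :
    Real.log (μ θ₀) - ∑ θ, l θ / l θ₀ ≤ Real.log (bayesUpdate μ l θ₀) := by
  have hsum : ∑ θ, μ θ * (l θ / l θ₀) ≤ ∑ θ, l θ / l θ₀ := Finset.sum_le_sum fun θ _ =>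
    mul_le_of_le_one_left (div_pos (hl θ) (hl θ₀)).le (hμ.le_one θ)
  linarith [one_sub_sum_mul_div_le_log_bayesUpdate_sub_log hμ hl θ₀]

noncomputable def geometricPool {ι : Type*} [Fintype ι] (w : ι → ℝ) (p : ι → Θ → ℝ) (θ : Θ) : ℝ :=
  Real.exp (∑ i, w i * Real.log (p i θ)) / ∑ θ', Real.exp (∑ i, w i * Real.log (p i θ'))

lemma isPositiveBelief_geometricPool [Nonempty Θ] {ι : Type*} [Fintype ι] (w : ι → ℝ)
    (p : ι → Θ → ℝ) : IsPositiveBelief (geometricPool w p) :=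
  isPositiveBelief_div_sum fun _ => Real.exp_pos _

lemma sum_mul_log_le_log_geometricPool [Nonempty Θ] {ι : Type*} [Fintype ι] {w : ι → ℝ}
    {p : ι → Θ → ℝ} (hw : ∀ i, 0 ≤ w i) (hw1 : ∑ i, w i = 1)
    (hp : ∀ i, IsPositiveBelief (p i)) (θ : Θ) :
    ∑ i, w i * Real.log (p i θ) ≤ Real.log (geometricPool w p θ) := by
  have hZ_pos : 0 < ∑ θ', Real.exp (∑ i, w i * Real.log (p i θ')) :=
    Finset.sum_pos (fun _ _ => Real.exp_pos _) Finset.univ_nonempty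
  have hZ_le : ∑ θ', Real.exp (∑ i, w i * Real.log (p i θ')) ≤ 1 := calc
    _ ≤ ∑ θ', ∑ i, w i * p i θ' := Finset.sum_le_sum fun θ' _ => by
        have hpow : ∀ i, Real.exp (w i * Real.log (p i θ')) = p i θ' ^ w i := fun i => by
          rw [mul_comm, Real.exp_mul, Real.exp_log ((hp i).pos θ')]
        simp only [Real.exp_sum, hpow]
        exact Real.geom_mean_le_arith_mean_weighted _ _ _ (fun i _ => hw i) hw1
          fun i _ => ((hp i).pos θ').le
    _ = ∑ i, w i := by
        rw [Finset.sum_comm]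
        simp_rw [← Finset.mul_sum, (hp _).sum_eq_one, mul_one]
    _ = 1 := hw1
  rw [geometricPool, Real.log_div (Real.exp_ne_zero _) hZ_pos.ne', Real.log_exp]
  linarith [Real.log_nonpos hZ_pos.le hZ_le]

end Belief

lemma sum_mul_log_update {ι Θ : Type*} [Fintype ι] [DecidableEq ι] (w : ι → ℝ) (p : ι → Θ → ℝ)
    (k : ι) (q : Θ → ℝ) (θ : Θ) :
    ∑ i, w i * Real.log (Function.update p k q i θ) =
      w k * Real.log (q θ) + ∑ i ∈ Finset.univ.erase k, w i * Real.log (p i θ) := by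
  rw [← Finset.add_sum_erase _ _ (Finset.mem_univ k), Function.update_self]
  congr 1
  exact Finset.sum_congr rfl fun i hi => by rw [Function.update_of_ne (Finset.ne_of_mem_erase hi)]

section Network

variable {K H : ℕ}

noncomputable def partialShare (θTX : Fin H) (p : Fin H → ℝ) (θ : Fin H) : ℝ :=
  if θ = θTX then p θTX else (1 - p θTX) / (H - 1)

lemma isPositiveBelief_partialShare (hH : 2 ≤ H) {p : Fin H → ℝ} (hp : IsPositiveBelief p)
    (θTX : Fin H) : IsPositiveBelief (partialShare θTX p) where
  pos θ := by
    unfold partialShare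
    split_ifs with h
    · exact hp.pos θTX
    · have : (2 : ℝ) ≤ H := by exact_mod_cast hH
      exact div_pos (by linarith [hp.lt_one h]) (by linarith)
  sum_eq_one := by
    have hH1 : (H : ℝ) - 1 ≠ 0 := by
      have : (2 : ℝ) ≤ H := by exact_mod_cast hH
      linarith
    simp only [partialShare, Finset.sum_ite, Finset.filter_eq', Finset.filter_ne',
      Finset.sum_const, Finset.card_erase_of_mem (Finset.mem_univ _), Finset.card_univ,
      Fintype.card_fin, Finset.mem_univ, if_true, Finset.card_singleton, one_smul, nsmul_eq_mul]
    rw [Nat.cast_sub (by omega), Nat.cast_one, mul_div_cancel₀ _ hH1]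
    ring

noncomputable def selfAwareStep (a : Fin K → Fin K → ℝ) (θTX : Fin H) (μ l : Fin K → Fin H → ℝ)
    (k : Fin K) : Fin H → ℝ :=
  geometricPool (fun ℓ => a ℓ k)
    (Function.update (fun ℓ => partialShare θTX (bayesUpdate (μ ℓ) (l ℓ))) k
      (bayesUpdate (μ k) (l k)))

-- `l j` holds the likelihoods of the signals received at time `j`; `l 0` is never read.
noncomputable def selfAwareBeliefs (a : Fin K → Fin K → ℝ) (θTX : Fin H)
    (μ₀ : Fin K → Fin H → ℝ) (l : ℕ → Fin K → Fin H → ℝ) : ℕ → Fin K → Fin H → ℝ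
  | 0 => μ₀
  | i + 1 => selfAwareStep a θTX (selfAwareBeliefs a θTX μ₀ l i) (l (i + 1))

variable {a : Fin K → Fin K → ℝ} {θTX : Fin H}

lemma isPositiveBelief_selfAwareBeliefs {μ₀ : Fin K → Fin H → ℝ}
    (hμ₀ : ∀ k, IsPositiveBelief (μ₀ k)) (l : ℕ → Fin K → Fin H → ℝ) :
    ∀ i k, IsPositiveBelief (selfAwareBeliefs a θTX μ₀ l i k)
  | 0, k => hμ₀ k
  | _ + 1, _ => have : Nonempty (Fin H) := ⟨θTX⟩; isPositiveBelief_geometricPool _ _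

lemma sum_mul_log_bayesUpdate_le_log_selfAwareStep (hH : 2 ≤ H) {k : Fin K}
    (ha : ∀ ℓ, 0 ≤ a ℓ k) (ha1 : ∑ ℓ, a ℓ k = 1) {μ l : Fin K → Fin H → ℝ}
    (hμ : ∀ ℓ, IsPositiveBelief (μ ℓ)) (hl : ∀ ℓ θ, 0 < l ℓ θ) :
    ∑ ℓ, a ℓ k * Real.log (bayesUpdate (μ ℓ) (l ℓ) θTX) ≤
      Real.log (selfAwareStep a θTX μ l k θTX) := by
  have : Nonempty (Fin H) := ⟨θTX⟩
  have hpool := sum_mul_log_le_log_geometricPool ha ha1 (p := Function.update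
    (fun ℓ => partialShare θTX (bayesUpdate (μ ℓ) (l ℓ))) k (bayesUpdate (μ k) (l k)))
    (fun ℓ => by
      rcases eq_or_ne ℓ k with rfl | h
      · simpa using isPositiveBelief_bayesUpdate (hμ ℓ) (hl ℓ)
      · simpa [h] using isPositiveBelief_partialShare hH
          (isPositiveBelief_bayesUpdate (hμ ℓ) (hl ℓ)) θTX) θTX
  refine le_of_eq_of_le (Finset.sum_congr rfl fun ℓ _ => ?_) hpool
  -- the own posterior and the shared ones agree at `θTX`
  rcases eq_or_ne ℓ k with rfl | h <;> simp [*, partialShare]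

lemma sum_mul_log_bayesUpdate_le_sum_mul_log_selfAwareStep (hH : 2 ≤ H)
    (ha : ∀ ℓ k, 0 ≤ a ℓ k) (ha1 : ∀ k, ∑ ℓ, a ℓ k = 1) {v : Fin K → ℝ} (hv : ∀ k, 0 ≤ v k)
    (hav : ∀ ℓ, ∑ k, a ℓ k * v k = v ℓ) {μ l : Fin K → Fin H → ℝ}
    (hμ : ∀ ℓ, IsPositiveBelief (μ ℓ)) (hl : ∀ ℓ θ, 0 < l ℓ θ) :
    ∑ ℓ, v ℓ * Real.log (bayesUpdate (μ ℓ) (l ℓ) θTX) ≤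
      ∑ k, v k * Real.log (selfAwareStep a θTX μ l k θTX) := calc
  _ = ∑ ℓ, (∑ k, a ℓ k * v k) * Real.log (bayesUpdate (μ ℓ) (l ℓ) θTX) := by simp only [hav]
  _ = ∑ k, v k * ∑ ℓ, a ℓ k * Real.log (bayesUpdate (μ ℓ) (l ℓ) θTX) := by
      simp only [Finset.sum_mul, Finset.mul_sum]
      rw [Finset.sum_comm]
      exact Finset.sum_congr rfl fun _ _ => Finset.sum_congr rfl fun _ _ => by ring
  _ ≤ _ := Finset.sum_le_sum fun k _ => mul_le_mul_of_nonneg_left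
      (sum_mul_log_bayesUpdate_le_log_selfAwareStep hH (ha · k) (ha1 k) hμ hl) (hv k)

lemma measurable_selfAwareStep (a : Fin K → Fin K → ℝ) (θTX : Fin H) :
    Measurable fun q : (Fin K → Fin H → ℝ) × (Fin K → Fin H → ℝ) =>
      selfAwareStep a θTX q.1 q.2 := by
  have hbayes : ∀ ℓ θ, Measurable fun q : (Fin K → Fin H → ℝ) × (Fin K → Fin H → ℝ) =>
      bayesUpdate (q.1 ℓ) (q.2 ℓ) θ := fun ℓ θ => by
    unfold bayesUpdate; fun_prop
  have hpooled : ∀ k ℓ θ, Measurable fun q : (Fin K → Fin H → ℝ) × (Fin K → Fin H → ℝ) =>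
      Function.update (fun ℓ => partialShare θTX (bayesUpdate (q.1 ℓ) (q.2 ℓ))) k
        (bayesUpdate (q.1 k) (q.2 k)) ℓ θ := fun k ℓ θ => by
    rcases eq_or_ne ℓ k with rfl | h
    · simpa using hbayes ℓ θ
    · simp only [Function.update_of_ne h, partialShare]
      split_ifs
      · exact hbayes ℓ θTX
      · exact (measurable_const.sub (hbayes ℓ θTX)).div_const _
  have hexp : ∀ k θ, Measurable fun q : (Fin K → Fin H → ℝ) × (Fin K → Fin H → ℝ) =>
      Real.exp (∑ ℓ, a ℓ k * Real.log (Function.update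
        (fun ℓ => partialShare θTX (bayesUpdate (q.1 ℓ) (q.2 ℓ))) k
        (bayesUpdate (q.1 k) (q.2 k)) ℓ θ)) := fun k θ =>
    Real.measurable_exp.comp <| Finset.measurable_sum _ fun ℓ _ =>
      (Real.measurable_log.comp (hpooled k ℓ θ)).const_mul _
  exact measurable_pi_lambda _ fun k => measurable_pi_lambda _ fun θ =>
    (hexp k θ).div (Finset.measurable_sum _ fun θ' _ => hexp k θ')

lemma eq_selfAwareBeliefs_of_recursion {μ ψ ψh : Fin K → ℕ → Fin H → ℝ}
    {μ₀ : Fin K → Fin H → ℝ} {l : ℕ → Fin K → Fin H → ℝ} (hμ0 : ∀ k θ, μ k 0 θ = μ₀ k θ)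
    (hψ : ∀ k (i : ℕ) θ, ψ k (i + 1) θ = bayesUpdate (μ k i) (l (i + 1) k) θ)
    (hψh_tx : ∀ k (i : ℕ), ψh k (i + 1) θTX = ψ k (i + 1) θTX)
    (hψh_ntx : ∀ k (i : ℕ) θ, θ ≠ θTX →
      ψh k (i + 1) θ = (1 - ψ k (i + 1) θTX) / ((H : ℝ) - 1))
    (hcomb : ∀ k (i : ℕ) θ, μ k (i + 1) θ =
      Real.exp (a k k * Real.log (ψ k (i + 1) θ) +
          ∑ ℓ ∈ Finset.univ.erase k, a ℓ k * Real.log (ψh ℓ (i + 1) θ)) /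
        ∑ θ', Real.exp (a k k * Real.log (ψ k (i + 1) θ') +
          ∑ ℓ ∈ Finset.univ.erase k, a ℓ k * Real.log (ψh ℓ (i + 1) θ'))) (i : ℕ) :
    (fun k => μ k i) = selfAwareBeliefs a θTX μ₀ l i := by
  induction i with
  | zero => exact funext fun k => funext (hμ0 k)
  | succ i ih =>
    have hψ' : ∀ k, ψ k (i + 1) = bayesUpdate (selfAwareBeliefs a θTX μ₀ l i k) (l (i + 1) k) :=
      fun k => funext fun θ => by rw [hψ, ← ih]
    have hψh' : ∀ k, ψh k (i + 1) = partialShare θTX (ψ k (i + 1)) := fun k => funext fun θ => by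
      unfold partialShare
      split_ifs with h
      · exact h ▸ hψh_tx k i
      · exact hψh_ntx k i θ h
    funext k θ
    simp only [hcomb, selfAwareBeliefs, selfAwareStep, geometricPool, sum_mul_log_update, ← hψ',
      ← hψh']

end Network

section Probability

variable {Θ : Type*} [Fintype Θ] {Ω : Type*} {mΩ : MeasurableSpace Ω} {P : Measure Ω}

lemma setIntegral_mul_eq_mul_integral_of_indep {𝓖 𝓗 : MeasurableSpace Ω} (h𝓖 : 𝓖 ≤ mΩ)
    (h𝓗 : 𝓗 ≤ mΩ) (hind : Indep 𝓖 𝓗 P) {f g : Ω → ℝ} (hf : Measurable[𝓖] f)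
    (hg : Measurable[𝓗] g) {s : Set Ω} (hs : MeasurableSet[𝓖] s) :
    ∫ ω in s, f ω * g ω ∂P = (∫ ω in s, f ω ∂P) * ∫ ω, g ω ∂P := by
  have hfs : Measurable[𝓖] (s.indicator f) := hf.indicator hs
  have hfg : IndepFun (s.indicator f) g P := by
    rw [IndepFun_iff_Indep]
    exact indep_of_indep_of_le_left (indep_of_indep_of_le_right hind hg.comap_le) hfs.comap_le
  rw [← integral_indicator (h𝓖 _ hs), ← integral_indicator (h𝓖 _ hs)]
  simp only [Set.indicator_mul_left]
  exact hfg.integral_fun_mul_eq_mul_integral (hfs.mono h𝓖 le_rfl).aestronglyMeasurable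
    (hg.mono h𝓗 le_rfl).aestronglyMeasurable

variable {μ l : Ω → Θ → ℝ} {θ₀ : Θ}

lemma integrable_log_bayesUpdate (hμm : Measurable μ) (hlm : Measurable l)
    (hμ : ∀ ω, IsPositiveBelief (μ ω)) (hl : ∀ ω θ, 0 < l ω θ)
    (hr : ∀ θ, Integrable (fun ω => l ω θ / l ω θ₀) P)
    (hint : Integrable (fun ω => Real.log (μ ω θ₀)) P) :
    Integrable (fun ω => Real.log (bayesUpdate (μ ω) (l ω) θ₀)) P := by
  refine Integrable.mono' (hint.abs.add (integrable_finsetSum Finset.univ fun θ _ => hr θ))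
    (Real.measurable_log.comp (by unfold bayesUpdate; fun_prop)).aestronglyMeasurable
    (ae_of_all _ fun ω => ?_)
  have hlow := log_sub_sum_div_le_log_bayesUpdate (hμ ω) (hl ω) θ₀
  rw [Real.norm_eq_abs, abs_of_nonpos ((isPositiveBelief_bayesUpdate (hμ ω) (hl ω)).log_nonpos θ₀),
    Pi.add_apply]
  linarith [neg_abs_le (Real.log (μ ω θ₀))]

lemma setIntegral_log_le_setIntegral_log_bayesUpdate [IsFiniteMeasure P]
    {𝓖 𝓗 : MeasurableSpace Ω} (h𝓖 : 𝓖 ≤ mΩ) (h𝓗 : 𝓗 ≤ mΩ) (hind : Indep 𝓖 𝓗 P)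
    (hμm : Measurable[𝓖] μ) (hlm : Measurable[𝓗] l) (hμ : ∀ ω, IsPositiveBelief (μ ω))
    (hl : ∀ ω θ, 0 < l ω θ) (hr : ∀ θ, ∫ ω, l ω θ / l ω θ₀ ∂P = 1)
    (hint : Integrable (fun ω => Real.log (μ ω θ₀)) P) {s : Set Ω} (hs : MeasurableSet[𝓖] s) :
    ∫ ω in s, Real.log (μ ω θ₀) ∂P ≤ ∫ ω in s, Real.log (bayesUpdate (μ ω) (l ω) θ₀) ∂P := by
  have hr_int : ∀ θ, Integrable (fun ω => l ω θ / l ω θ₀) P := fun θ =>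
    Integrable.of_integral_ne_zero (by rw [hr θ]; exact one_ne_zero)
  have hμθ : ∀ θ, Measurable[𝓖] fun ω => μ ω θ := fun θ => (measurable_pi_apply θ).comp hμm
  have hμ_int : ∀ θ, Integrable (fun ω => μ ω θ) P := fun θ =>
    .of_bound ((hμθ θ).mono h𝓖 le_rfl).aestronglyMeasurable 1 (ae_of_all _ fun ω => by
      rw [Real.norm_eq_abs, abs_of_pos ((hμ ω).pos θ)]; exact (hμ ω).le_one θ)
  have hμr_int : ∀ θ, Integrable (fun ω => μ ω θ * (l ω θ / l ω θ₀)) P := fun θ =>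
    (hr_int θ).bdd_mul ((hμθ θ).mono h𝓖 le_rfl).aestronglyMeasurable
      (c := 1) (ae_of_all _ fun ω => by
        rw [Real.norm_eq_abs, abs_of_pos ((hμ ω).pos θ)]; exact (hμ ω).le_one θ)
  have hdev_int : Integrable (fun ω => 1 - ∑ θ, μ ω θ * (l ω θ / l ω θ₀)) P :=
    (integrable_const 1).sub (integrable_finsetSum Finset.univ fun θ _ => hμr_int θ)
  -- conditionally on `𝓖`, every likelihood ratio has mean one
  have hmean : ∫ ω in s, (1 - ∑ θ, μ ω θ * (l ω θ / l ω θ₀)) ∂P = 0 := by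
    have hratio : ∀ θ, Measurable[𝓗] fun ω => l ω θ / l ω θ₀ := fun θ =>
      ((measurable_pi_apply θ).comp hlm).div ((measurable_pi_apply θ₀).comp hlm)
    rw [integral_sub (integrable_const _)
      (integrable_finsetSum Finset.univ fun θ _ => hμr_int θ).restrict,
      integral_finsetSum Finset.univ fun θ _ => (hμr_int θ).restrict]
    simp only [setIntegral_mul_eq_mul_integral_of_indep h𝓖 h𝓗 hind (hμθ _) (hratio _) hs, hr,
      mul_one]
    rw [← integral_finsetSum Finset.univ fun θ _ => (hμ_int θ).restrict]
    simp [(hμ _).sum_eq_one]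
  have hbayes_int := integrable_log_bayesUpdate (hμm.mono h𝓖 le_rfl) (hlm.mono h𝓗 le_rfl) hμ hl
    hr_int hint
  calc ∫ ω in s, Real.log (μ ω θ₀) ∂P
      = ∫ ω in s, (Real.log (μ ω θ₀) + (1 - ∑ θ, μ ω θ * (l ω θ / l ω θ₀))) ∂P := by
        rw [integral_add hint.restrict hdev_int.restrict, hmean, add_zero]
    _ ≤ ∫ ω in s, Real.log (bayesUpdate (μ ω) (l ω) θ₀) ∂P :=
        setIntegral_mono (hint.add hdev_int).integrableOn hbayes_int.integrableOn fun ω => by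
            linarith [one_sub_sum_mul_div_le_log_bayesUpdate_sub_log (hμ ω) (hl ω) θ₀]

lemma integral_comp_div_of_map_eq_withDensity {X : Type*} [MeasurableSpace X] {ν : Measure X}
    {Y : Ω → X} {f g : X → ℝ} (hY : Measurable Y)
    (hmap : P.map Y = ν.withDensity fun x => ENNReal.ofReal (f x)) (hf : Measurable f)
    (hf_pos : ∀ x, 0 < f x) (hg : Measurable g) :
    ∫ ω, g (Y ω) / f (Y ω) ∂P = ∫ x, g x ∂ν := by
  rw [← integral_map (f := fun x => g x / f x) hY.aemeasurable (hg.div hf).aestronglyMeasurable,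
    hmap]
  change ∫ x, g x / f x ∂ν.withDensity (fun x => ((f x).toNNReal : ENNReal)) = _
  rw [integral_withDensity_eq_integral_smul hf.real_toNNReal]
  congr 1 with x
  rw [NNReal.smul_def, smul_eq_mul, Real.coe_toNNReal _ (hf_pos x).le,
    mul_div_cancel₀ _ (hf_pos x).ne']

lemma MeasureTheory.Submartingale.ae_tendsto_limitProcess_of_nonpos [IsFiniteMeasure P]
    {ℱ : Filtration ℕ mΩ} {f : ℕ → Ω → ℝ} (hf : Submartingale f ℱ P)
    (hf_nonpos : ∀ n ω, f n ω ≤ 0) :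
    ∀ᵐ ω ∂P, Tendsto (fun n => f n ω) atTop (𝓝 (ℱ.limitProcess f P ω)) := by
  refine hf.ae_tendsto_limitProcess (R := (-∫ ω, f 0 ω ∂P).toNNReal) fun n => ?_
  rw [eLpNorm_one_eq_lintegral_enorm, ← ofReal_integral_norm_eq_lintegral_enorm (hf.integrable n)]
  refine ENNReal.ofReal_le_ofReal ?_
  have hnorm : ∫ ω, ‖f n ω‖ ∂P = -∫ ω, f n ω ∂P := by
    rw [← integral_neg]
    exact integral_congr_ae (ae_of_all _ fun ω => by simp [abs_of_nonpos (hf_nonpos n ω)])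
  have hmono := hf.setIntegral_le (Nat.zero_le n) MeasurableSet.univ
  simp only [Measure.restrict_univ] at hmono
  linarith

lemma MeasureTheory.Submartingale.tendsto_integral_of_nonpos [IsFiniteMeasure P]
    {ℱ : Filtration ℕ mΩ} {f : ℕ → Ω → ℝ} (hf : Submartingale f ℱ P)
    (hf_nonpos : ∀ n ω, f n ω ≤ 0) :
    Tendsto (fun n => ∫ ω, f n ω ∂P) atTop (𝓝 (⨆ n, ∫ ω, f n ω ∂P)) := by
  refine tendsto_atTop_ciSup (fun i j hij => ?_) ⟨0, ?_⟩
  · simpa using hf.setIntegral_le hij MeasurableSet.univ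
  · rintro _ ⟨n, rfl⟩
    exact integral_nonpos (hf_nonpos n)

end Probability

section LogBeliefSubmartingale

variable {Ω : Type*} {mΩ : MeasurableSpace Ω} {P : Measure Ω} {K H : ℕ}
  {a : Fin K → Fin K → ℝ} {θ₀ : Fin H} {μ₀ : Fin K → Fin H → ℝ} {𝓕 : Filtration ℕ mΩ}
  {l : ℕ → Ω → Fin K → Fin H → ℝ}

lemma measurable_selfAwareBeliefs (hl : ∀ i, Measurable[𝓕 (i + 1)] (l (i + 1))) (i : ℕ) :
    Measurable[𝓕 i] fun ω => selfAwareBeliefs a θ₀ μ₀ (fun j => l j ω) i := by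
  induction i with
  | zero => exact measurable_const
  | succ i ih =>
    have hpair : Measurable[𝓕 (i + 1)] fun ω =>
        (selfAwareBeliefs a θ₀ μ₀ (fun j => l j ω) i, l (i + 1) ω) :=
      (ih.mono (𝓕.mono i.le_succ) le_rfl).prodMk (hl i)
    exact ((measurable_selfAwareStep a θ₀).comp hpair :)

lemma integrable_log_bayesUpdate_selfAwareBeliefs (hμ₀ : ∀ k, IsPositiveBelief (μ₀ k))
    (hl_pos : ∀ j ω k θ, 0 < l j ω k θ) (hl_meas : ∀ i, Measurable[𝓕 (i + 1)] (l (i + 1)))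
    (hl_ratio : ∀ i k θ, ∫ ω, l (i + 1) ω k θ / l (i + 1) ω k θ₀ ∂P = 1) {i : ℕ} {ℓ : Fin K}
    (hint : Integrable (fun ω => Real.log (selfAwareBeliefs a θ₀ μ₀ (fun j => l j ω) i ℓ θ₀)) P) :
    Integrable (fun ω => Real.log (bayesUpdate (selfAwareBeliefs a θ₀ μ₀ (fun j => l j ω) i ℓ)
      (l (i + 1) ω ℓ) θ₀)) P :=
  integrable_log_bayesUpdate
    ((measurable_pi_apply ℓ).comp ((measurable_selfAwareBeliefs hl_meas i).mono (𝓕.le i) le_rfl))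
    ((measurable_pi_apply ℓ).comp ((hl_meas i).mono (𝓕.le _) le_rfl))
    (fun _ => isPositiveBelief_selfAwareBeliefs hμ₀ _ i ℓ) (fun ω => hl_pos _ ω ℓ)
    (fun θ => .of_integral_ne_zero (by rw [hl_ratio i ℓ θ]; exact one_ne_zero)) hint

lemma integrable_log_selfAwareBeliefs [IsFiniteMeasure P] (hH : 2 ≤ H) (ha : ∀ ℓ k, 0 ≤ a ℓ k)
    (ha1 : ∀ k, ∑ ℓ, a ℓ k = 1) (hμ₀ : ∀ k, IsPositiveBelief (μ₀ k))
    (hl_pos : ∀ j ω k θ, 0 < l j ω k θ) (hl_meas : ∀ i, Measurable[𝓕 (i + 1)] (l (i + 1)))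
    (hl_ratio : ∀ i k θ, ∫ ω, l (i + 1) ω k θ / l (i + 1) ω k θ₀ ∂P = 1) :
    ∀ i k, Integrable (fun ω => Real.log (selfAwareBeliefs a θ₀ μ₀ (fun j => l j ω) i k θ₀)) P
  | 0, k => by simp only [selfAwareBeliefs]; exact integrable_const _
  | i + 1, k => by
    have hμ := isPositiveBelief_selfAwareBeliefs (a := a) (θTX := θ₀) hμ₀
    have hbayes : ∀ ℓ, Integrable (fun ω => Real.log (bayesUpdate
        (selfAwareBeliefs a θ₀ μ₀ (fun j => l j ω) i ℓ) (l (i + 1) ω ℓ) θ₀)) P := fun ℓ =>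
      integrable_log_bayesUpdate_selfAwareBeliefs hμ₀ hl_pos hl_meas hl_ratio
        (integrable_log_selfAwareBeliefs hH ha ha1 hμ₀ hl_pos hl_meas hl_ratio i ℓ)
    refine Integrable.mono'
      (integrable_finsetSum Finset.univ fun ℓ _ => (hbayes ℓ).abs.const_mul (a ℓ k))
      (Real.measurable_log.comp ((measurable_pi_apply θ₀).comp ((measurable_pi_apply k).comp
        ((measurable_selfAwareBeliefs hl_meas (i + 1)).mono (𝓕.le _) le_rfl)))).aestronglyMeasurable
      (ae_of_all _ fun ω => ?_)
    have hlow := sum_mul_log_bayesUpdate_le_log_selfAwareStep (θTX := θ₀) hH (ha · k) (ha1 k)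
      (fun ℓ => hμ (fun j => l j ω) i ℓ) (hl_pos (i + 1) ω)
    rw [Real.norm_eq_abs, abs_of_nonpos ((hμ _ (i + 1) k).log_nonpos θ₀), neg_le]
    refine le_trans ?_ hlow
    rw [← Finset.sum_neg_distrib]
    exact Finset.sum_le_sum fun ℓ _ => by
      rw [← mul_neg]; exact mul_le_mul_of_nonneg_left (neg_abs_le _) (ha ℓ k)

lemma setIntegral_sum_mul_log_selfAwareBeliefs_le_succ [IsFiniteMeasure P] (hH : 2 ≤ H)
    (ha : ∀ ℓ k, 0 ≤ a ℓ k) (ha1 : ∀ k, ∑ ℓ, a ℓ k = 1) {v : Fin K → ℝ} (hv : ∀ k, 0 ≤ v k)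
    (hav : ∀ ℓ, ∑ k, a ℓ k * v k = v ℓ) (hμ₀ : ∀ k, IsPositiveBelief (μ₀ k))
    (hl_pos : ∀ j ω k θ, 0 < l j ω k θ) (hl_meas : ∀ i, Measurable[𝓕 (i + 1)] (l (i + 1)))
    (hl_indep : ∀ i, Indep (𝓕 i) (MeasurableSpace.comap (l (i + 1)) inferInstance) P)
    (hl_ratio : ∀ i k θ, ∫ ω, l (i + 1) ω k θ / l (i + 1) ω k θ₀ ∂P = 1) {i : ℕ}
    {s : Set Ω} (hs : MeasurableSet[𝓕 i] s) :
    ∫ ω in s, ∑ k, v k * Real.log (selfAwareBeliefs a θ₀ μ₀ (fun j => l j ω) i k θ₀) ∂P ≤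
      ∫ ω in s, ∑ k, v k *
        Real.log (selfAwareBeliefs a θ₀ μ₀ (fun j => l j ω) (i + 1) k θ₀) ∂P := by
  have hμ := isPositiveBelief_selfAwareBeliefs (a := a) (θTX := θ₀) hμ₀
  have hlog := integrable_log_selfAwareBeliefs hH ha ha1 hμ₀ hl_pos hl_meas hl_ratio
  have hupdate : ∀ ℓ, ∫ ω in s, Real.log (selfAwareBeliefs a θ₀ μ₀ (fun j => l j ω) i ℓ θ₀) ∂P ≤
      ∫ ω in s, Real.log (bayesUpdate (selfAwareBeliefs a θ₀ μ₀ (fun j => l j ω) i ℓ)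
        (l (i + 1) ω ℓ) θ₀) ∂P := fun ℓ =>
    setIntegral_log_le_setIntegral_log_bayesUpdate (𝓕.le i)
      ((hl_meas i).comap_le.trans (𝓕.le _)) (hl_indep i)
      ((measurable_pi_apply ℓ).comp (measurable_selfAwareBeliefs hl_meas i))
      ((measurable_pi_apply ℓ).comp (Measurable.of_comap_le le_rfl))
      (fun ω => hμ _ i ℓ) (fun ω => hl_pos _ ω ℓ) (hl_ratio i ℓ) (hlog i ℓ) hs
  have hbayes_int : ∀ ℓ, Integrable (fun ω => v ℓ * Real.log (bayesUpdate
      (selfAwareBeliefs a θ₀ μ₀ (fun j => l j ω) i ℓ) (l (i + 1) ω ℓ) θ₀)) P := fun ℓ =>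
    (integrable_log_bayesUpdate_selfAwareBeliefs hμ₀ hl_pos hl_meas hl_ratio (hlog i ℓ)).const_mul _
  calc ∫ ω in s, ∑ k, v k * Real.log (selfAwareBeliefs a θ₀ μ₀ (fun j => l j ω) i k θ₀) ∂P
      = ∑ k, v k * ∫ ω in s, Real.log (selfAwareBeliefs a θ₀ μ₀ (fun j => l j ω) i k θ₀) ∂P := by
        rw [integral_finsetSum Finset.univ fun k _ => ((hlog i k).const_mul _).restrict]
        simp only [integral_const_mul]
    _ ≤ ∑ ℓ, v ℓ * ∫ ω in s, Real.log (bayesUpdate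
          (selfAwareBeliefs a θ₀ μ₀ (fun j => l j ω) i ℓ) (l (i + 1) ω ℓ) θ₀) ∂P :=
        Finset.sum_le_sum fun ℓ _ => mul_le_mul_of_nonneg_left (hupdate ℓ) (hv ℓ)
    _ = ∫ ω in s, ∑ ℓ, v ℓ * Real.log (bayesUpdate
          (selfAwareBeliefs a θ₀ μ₀ (fun j => l j ω) i ℓ) (l (i + 1) ω ℓ) θ₀) ∂P := by
        rw [integral_finsetSum Finset.univ fun ℓ _ => (hbayes_int ℓ).restrict]
        simp only [integral_const_mul]
    _ ≤ ∫ ω in s, ∑ k, v k *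
          Real.log (selfAwareBeliefs a θ₀ μ₀ (fun j => l j ω) (i + 1) k θ₀) ∂P :=
        setIntegral_mono (integrable_finsetSum Finset.univ fun ℓ _ => hbayes_int ℓ).integrableOn
          (integrable_finsetSum Finset.univ fun k _ =>
            (hlog (i + 1) k).const_mul (v k)).integrableOn fun ω =>
          sum_mul_log_bayesUpdate_le_sum_mul_log_selfAwareStep hH ha ha1 hv hav
            (fun ℓ => hμ _ i ℓ) (hl_pos (i + 1) ω)

theorem submartingale_sum_mul_log_selfAwareBeliefs [IsFiniteMeasure P] (hH : 2 ≤ H)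
    (ha : ∀ ℓ k, 0 ≤ a ℓ k) (ha1 : ∀ k, ∑ ℓ, a ℓ k = 1) {v : Fin K → ℝ} (hv : ∀ k, 0 ≤ v k)
    (hav : ∀ ℓ, ∑ k, a ℓ k * v k = v ℓ) (hμ₀ : ∀ k, IsPositiveBelief (μ₀ k))
    (hl_pos : ∀ j ω k θ, 0 < l j ω k θ) (hl_meas : ∀ i, Measurable[𝓕 (i + 1)] (l (i + 1)))
    (hl_indep : ∀ i, Indep (𝓕 i) (MeasurableSpace.comap (l (i + 1)) inferInstance) P)
    (hl_ratio : ∀ i k θ, ∫ ω, l (i + 1) ω k θ / l (i + 1) ω k θ₀ ∂P = 1) :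
    Submartingale
      (fun i ω => ∑ k, v k * Real.log (selfAwareBeliefs a θ₀ μ₀ (fun j => l j ω) i k θ₀)) 𝓕 P := by
  have hlog := integrable_log_selfAwareBeliefs hH ha ha1 hμ₀ hl_pos hl_meas hl_ratio
  refine submartingale_of_setIntegral_le_succ (fun i => ?_)
    (fun i => integrable_finsetSum Finset.univ fun k _ => (hlog i k).const_mul (v k))
    fun i s hs => setIntegral_sum_mul_log_selfAwareBeliefs_le_succ hH ha ha1 hv hav hμ₀ hl_pos
      hl_meas hl_indep hl_ratio hs
  exact (Finset.measurable_sum _ fun k _ => (Real.measurable_log.comp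
    ((measurable_pi_apply θ₀).comp ((measurable_pi_apply k).comp
      (measurable_selfAwareBeliefs hl_meas i)))).const_mul _).stronglyMeasurable

end LogBeliefSubmartingale

section Signals

variable {Ω : Type*} {mΩ : MeasurableSpace Ω} {P : Measure Ω} {K H : ℕ} {X : Fin K → Type*}
  [∀ k, MeasurableSpace (X k)] {ξ : ∀ k, ℕ → Ω → X k}

def signalFiltration (ξ : ∀ k, ℕ → Ω → X k) (hξ : ∀ k i, Measurable (ξ k i)) :
    Filtration ℕ mΩ where
  seq n := ⨆ j < n, MeasurableSpace.comap (fun ω (k : Fin K) => ξ k (j + 1) ω) MeasurableSpace.pi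
  mono' _ _ hpq := by
    apply biSup_mono
    omega
  le' _ := iSup₂_le fun j _ => (measurable_pi_lambda _ fun k => hξ k (j + 1)).comap_le

variable {L : ∀ k, Fin H → X k → ℝ}

lemma measurable_lik_pi (hL : ∀ k θ, Measurable (L k θ)) :
    Measurable fun (x : ∀ k, X k) (k : Fin K) (θ : Fin H) => L k θ (x k) :=
  measurable_pi_lambda _ fun k => measurable_pi_lambda _ fun θ =>
    (hL k θ).comp (measurable_pi_apply k)

lemma measurable_lik_signalFiltration (hξ : ∀ k i, Measurable (ξ k i))
    (hL : ∀ k θ, Measurable (L k θ)) (i : ℕ) :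
    Measurable[signalFiltration ξ hξ (i + 1)] fun ω k θ => L k θ (ξ k (i + 1) ω) :=
  (measurable_lik_pi hL).comp <| Measurable.of_comap_le <| le_biSup (f := fun j =>
    MeasurableSpace.comap (fun ω (k : Fin K) => ξ k (j + 1) ω) MeasurableSpace.pi) i.lt_succ_self

lemma indep_lik_signalFiltration (hξ : ∀ k i, Measurable (ξ k i))
    (hL : ∀ k θ, Measurable (L k θ))
    (hind : iIndepFun (m := fun _ : ℕ => MeasurableSpace.pi) (fun i ω k => ξ k (i + 1) ω) P)
    (i : ℕ) :
    Indep (signalFiltration ξ hξ i)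
      (MeasurableSpace.comap (fun ω k θ => L k θ (ξ k (i + 1) ω)) inferInstance) P := by
  have hpast := indep_biSup_compl (fun j => (measurable_pi_lambda _ fun k => hξ k (j + 1)).comap_le)
    hind.iIndep {j | j < i}
  refine indep_of_indep_of_le_right hpast (le_trans ?_ (le_biSup (f := fun j =>
    MeasurableSpace.comap (fun ω (k : Fin K) => ξ k (j + 1) ω) MeasurableSpace.pi)
      (show i ∈ {j : ℕ | j < i}ᶜ by simp)))
  exact ((measurable_lik_pi hL).comp (comap_measurable _)).comap_le

end Signals

theorem submartingale_convergence_with_self_awareness_general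
    {Ω : Type} [mΩ : MeasurableSpace Ω] (P : Measure Ω) [IsProbabilityMeasure P]
    (K H : ℕ) (hH : 2 ≤ H)
    (X : Fin K → Type) [∀ k, MeasurableSpace (X k)]
    (ν : ∀ k, Measure (X k))
    (L : ∀ k : Fin K, Fin H → X k → ℝ)
    (θ0 : Fin H)
    (hLpos : ∀ k θ x, 0 < L k θ x)
    (hLmeas : ∀ k θ, Measurable (L k θ))
    (hLdens : ∀ k θ, ∫ x, L k θ x ∂(ν k) = 1)
    (ξ : ∀ k : Fin K, ℕ → Ω → X k)
    (hξmeas : ∀ k i, Measurable (ξ k i))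
    (hξdist : ∀ k (i : ℕ), 1 ≤ i →
      Measure.map (ξ k i) P = (ν k).withDensity (fun x => ENNReal.ofReal (L k θ0 x)))
    (hξindep : iIndepFun (m := fun _ : ℕ => MeasurableSpace.pi)
      (fun (i : ℕ) (ω : Ω) (k : Fin K) => ξ k (i + 1) ω) P)
    (a : Fin K → Fin K → ℝ)
    (ha_nonneg : ∀ ℓ k, 0 ≤ a ℓ k)
    (ha_stoch : ∀ k, ∑ ℓ, a ℓ k = 1)
    (v : Fin K → ℝ)
    (hv_pos : ∀ ℓ, 0 < v ℓ)
    (hv_eig : ∀ ℓ, ∑ k, a ℓ k * v k = v ℓ)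
    (θTX : Fin H)
    (hθTX : θTX = θ0)
    (μb ψ ψh : Fin K → ℕ → Fin H → Ω → ℝ)
    (μinit : Fin K → Fin H → ℝ)
    (hμinit_pos : ∀ k θ, 0 < μinit k θ)
    (hμinit_sum : ∀ k, ∑ θ, μinit k θ = 1)
    (hμb0 : ∀ k θ ω, μb k 0 θ ω = μinit k θ)
    (hψ : ∀ k (i : ℕ) θ ω, ψ k (i + 1) θ ω =
      μb k i θ ω * L k θ (ξ k (i + 1) ω) /
        ∑ θ', μb k i θ' ω * L k θ' (ξ k (i + 1) ω))
    (hψh_tx : ∀ k (i : ℕ) ω, ψh k (i + 1) θTX ω = ψ k (i + 1) θTX ω)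
    (hψh_ntx : ∀ k (i : ℕ) θ ω, θ ≠ θTX →
      ψh k (i + 1) θ ω = (1 - ψ k (i + 1) θTX ω) / ((H : ℝ) - 1))
    (hcomb : ∀ k (i : ℕ) θ ω, μb k (i + 1) θ ω =
      Real.exp (a k k * Real.log (ψ k (i + 1) θ ω) +
          ∑ ℓ ∈ Finset.univ.erase k, a ℓ k * Real.log (ψh ℓ (i + 1) θ ω)) /
        ∑ θ', Real.exp (a k k * Real.log (ψ k (i + 1) θ' ω) +
          ∑ ℓ ∈ Finset.univ.erase k, a ℓ k * Real.log (ψh ℓ (i + 1) θ' ω)))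
    :
    (∃ minf : Ω → ℝ, ∀ᵐ ω ∂P,
      Tendsto (fun (i : ℕ) => ∑ k, v k * Real.log (μb k i θTX ω)) atTop (𝓝 (minf ω))) ∧
    (∃ c : ℝ,
      Tendsto (fun (i : ℕ) => ∫ ω, (∑ k, v k * Real.log (μb k i θTX ω)) ∂P) atTop (𝓝 c)) := by
  subst hθTX
  have hbeliefs : ∀ k i θ ω,
      μb k i θ ω = selfAwareBeliefs a θTX μinit (fun j k θ => L k θ (ξ k j ω)) i k θ :=
    fun k i θ ω => congrFun (congrFun (eq_selfAwareBeliefs_of_recursion (μ := (μb · · · ω))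
      (ψ := (ψ · · · ω)) (ψh := (ψh · · · ω)) (l := fun j k θ => L k θ (ξ k j ω))
      (fun k θ => hμb0 k θ ω) (fun k i θ => hψ k i θ ω) (fun k i => hψh_tx k i ω)
      (fun k i θ => hψh_ntx k i θ ω) (fun k i θ => hcomb k i θ ω) i) k) θ
  have hμ₀ : ∀ k, IsPositiveBelief (μinit k) := fun k => ⟨hμinit_pos k, hμinit_sum k⟩
  have hsub := submartingale_sum_mul_log_selfAwareBeliefs (𝓕 := signalFiltration ξ hξmeas)
    (l := fun j ω k θ => L k θ (ξ k j ω)) hH ha_nonneg ha_stoch (fun k => (hv_pos k).le) hv_eig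
    hμ₀ (fun _ _ _ _ => hLpos _ _ _) (measurable_lik_signalFiltration hξmeas hLmeas)
    (indep_lik_signalFiltration hξmeas hLmeas hξindep) fun i k θ =>
      (integral_comp_div_of_map_eq_withDensity (hξmeas k (i + 1))
        (hξdist k (i + 1) (Nat.le_add_left 1 i)) (hLmeas k θTX) (hLpos k θTX) (hLmeas k θ)).trans
        (hLdens k θ)
  have hnonpos : ∀ i ω, ∑ k, v k *
      Real.log (selfAwareBeliefs a θTX μinit (fun j k θ => L k θ (ξ k j ω)) i k θTX) ≤ 0 :=
    fun i ω => Finset.sum_nonpos fun k _ => mul_nonpos_of_nonneg_of_nonpos (hv_pos k).le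
      ((isPositiveBelief_selfAwareBeliefs hμ₀ _ i k).log_nonpos θTX)
  simp only [hbeliefs]
  exact ⟨⟨_, hsub.ae_tendsto_limitProcess_of_nonpos hnonpos⟩,
    ⟨_, hsub.tendsto_integral_of_nonpos hnonpos⟩⟩

theorem submartingale_convergence_with_self_awareness
    {Ω : Type} [mΩ : MeasurableSpace Ω] (P : Measure Ω) [IsProbabilityMeasure P]
    (K H : ℕ) (hK : 0 < K) (hH : 2 ≤ H)
    (X : Fin K → Type) [∀ k, MeasurableSpace (X k)]
    (ν : ∀ k, Measure (X k))
    (L : ∀ k : Fin K, Fin H → X k → ℝ)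
    (θ0 : Fin H)
    (hLpos : ∀ k θ x, 0 < L k θ x)
    (hLmeas : ∀ k θ, Measurable (L k θ))
    (hLdens : ∀ k θ, ∫ x, L k θ x ∂(ν k) = 1)
    (ξ : ∀ k : Fin K, ℕ → Ω → X k)
    (hξmeas : ∀ k i, Measurable (ξ k i))
    (hξdist : ∀ k (i : ℕ), 1 ≤ i →
      Measure.map (ξ k i) P = (ν k).withDensity (fun x => ENNReal.ofReal (L k θ0 x)))
    (hξindep : iIndepFun (m := fun _ : ℕ => MeasurableSpace.pi)
      (fun (i : ℕ) (ω : Ω) (k : Fin K) => ξ k (i + 1) ω) P)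
    (hKL : ∀ k θ θ',
      Integrable (fun x => L k θ x * Real.log (L k θ x / L k θ' x)) (ν k))
    (a : Fin K → Fin K → ℝ)
    (ha_nonneg : ∀ ℓ k, 0 ≤ a ℓ k)
    (ha_stoch : ∀ k, ∑ ℓ, a ℓ k = 1)
    (ha_prim : ∃ n : ℕ, ∀ ℓ k, 0 < ((Matrix.of a) ^ n) ℓ k)
    (v : Fin K → ℝ)
    (hv_pos : ∀ ℓ, 0 < v ℓ)
    (hv_sum : ∑ ℓ, v ℓ = 1)
    (hv_eig : ∀ ℓ, ∑ k, a ℓ k * v k = v ℓ)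
    (ha_self : ∀ k, 0 < a k k)
    (θTX : Fin H)
    (hθTX : θTX = θ0)
    (μb ψ ψh : Fin K → ℕ → Fin H → Ω → ℝ)
    (μinit : Fin K → Fin H → ℝ)
    (hμinit_pos : ∀ k θ, 0 < μinit k θ)
    (hμinit_sum : ∀ k, ∑ θ, μinit k θ = 1)
    (hμb0 : ∀ k θ ω, μb k 0 θ ω = μinit k θ)
    (hψ : ∀ k (i : ℕ) θ ω, ψ k (i + 1) θ ω =
      μb k i θ ω * L k θ (ξ k (i + 1) ω) /
        ∑ θ', μb k i θ' ω * L k θ' (ξ k (i + 1) ω))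
    (hψh_tx : ∀ k (i : ℕ) ω, ψh k (i + 1) θTX ω = ψ k (i + 1) θTX ω)
    (hψh_ntx : ∀ k (i : ℕ) θ ω, θ ≠ θTX →
      ψh k (i + 1) θ ω = (1 - ψ k (i + 1) θTX ω) / ((H : ℝ) - 1))
    (hcomb : ∀ k (i : ℕ) θ ω, μb k (i + 1) θ ω =
      Real.exp (a k k * Real.log (ψ k (i + 1) θ ω) +
          ∑ ℓ ∈ Finset.univ.erase k, a ℓ k * Real.log (ψh ℓ (i + 1) θ ω)) /
        ∑ θ', Real.exp (a k k * Real.log (ψ k (i + 1) θ' ω) +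
          ∑ ℓ ∈ Finset.univ.erase k, a ℓ k * Real.log (ψh ℓ (i + 1) θ' ω)))
    :
    (∃ minf : Ω → ℝ, ∀ᵐ ω ∂P,
      Tendsto (fun (i : ℕ) => ∑ k, v k * Real.log (μb k i θTX ω)) atTop (𝓝 (minf ω))) ∧
    (∃ c : ℝ,
      Tendsto (fun (i : ℕ) => ∫ ω, (∑ k, v k * Real.log (μb k i θTX ω)) ∂P) atTop (𝓝 c)) :=
  submartingale_convergence_with_self_awareness_general (mΩ := mΩ) P K H hH X ν L θ0 hLpos hLmeas
    hLdens ξ hξmeas hξdist hξindep a ha_nonneg ha_stoch v hv_pos hv_eig θTX hθTX μb ψ ψh μinit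
    hμinit_pos hμinit_sum hμb0 hψ hψh_tx hψh_ntx hcomb
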